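/- Let S be the quintic del Pezzo surface with Aut(S) ≅ S5, and let Ξ be the set of 15 intersection points of pairs of lines on S. Then S5 acts transitively on Ξ, the stabilizer of each point of Ξ is a Sylow 2-subgroup of S5 (dihedral of order 8), and the correspondence Ξ → {Sylow 2-subgroups of S5} sending a point to its stabilizer is a bijection. -/

import Mathlib

/-- Vertices of the Petersen graph, modelled as the Kneser graph `K(5,2)`:
2-element subsets of a 5-element set. -/
abbrev KneserVert : Type := {s : Finset (Fin 5) // s.card = 2}

/-- The Petersen graph: two 2-element subsets of `{1,…,5}` are adjacent iff
they are disjoint.  It is the incidence graph of the 10 lines on a quintic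
del Pezzo surface (vertices = lines, adjacency = meeting). -/
def petersenGraph : SimpleGraph KneserVert where
  Adj a b := Disjoint a.1 b.1
  symm := ⟨fun a b h => h.symm⟩
  loopless := by
    constructor
    intro a h
    have h0 : a.1 = ⊥ := disjoint_self.mp h
    have h2 := a.2
    rw [h0] at h2
    simp at h2

/-- The automorphism group of a simple graph, as a subgroup of the permutation
group of its vertex set. -/
def graphAut {V : Type*} (G : SimpleGraph V) : Subgroup (Equiv.Perm V) where
  carrier := {e | ∀ a b : V, G.Adj (e a) (e b) ↔ G.Adj a b}
  one_mem' := by intro a b; simp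
  mul_mem' := by
    intro e f he hf a b
    simpa [Equiv.Perm.mul_apply] using (he (f a) (f b)).trans (hf a b)
  inv_mem' := by
    intro e he a b
    have h := he (e⁻¹ a) (e⁻¹ b)
    simpa using h.symm

/-- The stabilizer of an unordered pair (e.g. an edge of a graph) in the
permutation group of `V`. -/
def sym2Stab {V : Type*} (z : Sym2 V) : Subgroup (Equiv.Perm V) where
  carrier := {g | Sym2.map (⇑g) z = z}
  one_mem' := by simp [Sym2.map_id']
  mul_mem' := by
    intro g h hg hh
    simp only [Set.mem_setOf_eq] at hg hh ⊢
    rw [Equiv.Perm.coe_mul, ← Sym2.map_map, hh, hg]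
  inv_mem' := by
    intro g hg
    simp only [Set.mem_setOf_eq] at hg ⊢
    conv_lhs => rw [← hg]
    rw [Sym2.map_map]
    simp [Sym2.map_id']

/-!
Identify the lines with the 2-subsets of `{0, …, 4}`, two lines meeting iff the subsets are
disjoint. Every automorphism of the Petersen graph permutes the five maximal independent sets
(the "stars" of subsets through a fixed point), hence comes from `S₅`; so a faithful action of
`S₅` by graph automorphisms is the natural one twisted by an automorphism of `S₅`. For the
natural action, an edge `{ab, cd}` is moved to any other edge, and its stabilizer is the
dihedral group of order 8 generated by the 4-cycle `(a c b d)` and the transposition `(a b)`,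
a Sylow 2-subgroup. It fixes no other edge, so edges correspond bijectively to the conjugates of
this stabilizer, i.e. to all Sylow 2-subgroups.
-/

open Equiv Pointwise

lemma mem_sym2Stab {V : Type*} {z : Sym2 V} {σ : Perm V} : σ ∈ sym2Stab z ↔ z.map σ = z :=
  Iff.rfl

lemma Sym2.map_mem_edgeSet_of_mem_graphAut {V : Type*} {G : SimpleGraph V} {σ : Perm V}
    (hσ : σ ∈ graphAut G) {z : Sym2 V} (hz : z ∈ G.edgeSet) : z.map σ ∈ G.edgeSet := by
  induction z using Sym2.ind with
  | _ a b => exact (hσ a b).2 hz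

lemma SimpleGraph.IsNIndepSet.map_of_mem_graphAut {V : Type*} {G : SimpleGraph V} {σ : Perm V}
    (hσ : σ ∈ graphAut G) {n : ℕ} {s : Finset V} (hs : G.IsNIndepSet n s) :
    G.IsNIndepSet n (s.map σ.toEmbedding) := by
  rw [SimpleGraph.isNIndepSet_iff] at hs ⊢
  refine ⟨?_, by rw [Finset.card_map, hs.2]⟩
  rw [Finset.coe_map]
  rintro _ ⟨a, ha, rfl⟩ _ ⟨b, hb, rfl⟩ hab
  exact (hσ a b).not.mpr (hs.1 ha hb (ne_of_apply_ne _ hab))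

lemma SimpleGraph.Iso.permCongr_mem_graphAut {V W : Type*} {G : SimpleGraph V}
    {G' : SimpleGraph W} (f : G ≃g G') {σ : Perm V} (hσ : σ ∈ graphAut G) :
    f.toEquiv.permCongr σ ∈ graphAut G' := fun _ _ =>
  f.map_adj_iff.trans ((hσ _ _).trans f.symm.map_adj_iff)

lemma comap_sym2Stab_map {G V : Type*} [Group G] (ρ : G →* Perm V) (g : G) (z : Sym2 V) :
    (sym2Stab (z.map (ρ g))).comap ρ = MulAut.conj g • (sym2Stab z).comap ρ := by
  ext x
  simp only [Subgroup.mem_pointwise_smul_iff_inv_smul_mem, Subgroup.mem_comap, mem_sym2Stab,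
    MulAut.smul_def]
  rw [← (Sym2.map.injective (ρ g).injective).eq_iff (a := Sym2.map _ z)]
  simp only [Sym2.map_map, ← Perm.coe_mul, ← map_mul, MulAut.conj_inv_apply, mul_assoc,
    mul_inv_cancel_left]

lemma MonoidHom.exists_mulEquiv_apply_eq_of_range_le {G H : Type*} [Group G] [Group H]
    [Finite G] {φ ψ : G →* H} (hφ : Function.Injective φ) (hψ : Function.Injective ψ)
    (h : φ.range ≤ ψ.range) : ∃ θ : G ≃* G, ∀ g, φ g = ψ (θ g) := by
  let θ : G →* G :=
    (MonoidHom.ofInjective hψ).symm.toMonoidHom.comp ((Subgroup.inclusion h).comp φ.rangeRestrict)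
  have hθ : ∀ g, ψ (θ g) = φ g := fun g => MonoidHom.apply_ofInjective_symm hψ _
  have hθ_inj : Function.Injective θ := fun a b hab => hφ (by rw [← hθ, hab, hθ])
  exact ⟨MulEquiv.ofBijective θ hθ_inj.bijective_of_finite, fun g => (hθ g).symm⟩

section Intertwining

variable {G V W : Type*} [Group G] {ρ : G →* Perm V} {ρ' : G →* Perm W} {f : V ≃ W}
  {θ : G ≃* G}

lemma Sym2.map_map_of_intertwines (hf : ∀ g x, f (ρ g x) = ρ' (θ g) (f x)) (g : G)
    (z : Sym2 V) : (z.map (ρ g)).map f = (z.map f).map (ρ' (θ g)) := by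
  rw [Sym2.map_map, Sym2.map_map]
  exact congrArg (Sym2.map · z) (funext (hf g))

lemma comap_sym2Stab_of_intertwines (hf : ∀ g x, f (ρ g x) = ρ' (θ g) (f x)) (z : Sym2 V) :
    (sym2Stab z).comap ρ = ((sym2Stab (z.map f)).comap ρ').map (θ.symm : G →* G) := by
  rw [← Subgroup.comap_equiv_eq_map_symm]
  ext g
  simp only [Subgroup.mem_comap, mem_sym2Stab, MonoidHom.coe_coe,
    ← Sym2.map_map_of_intertwines hf, (Sym2.map.injective f.injective).eq_iff]

end Intertwining

lemma Sym2.map_map_equiv_symm {α β : Type*} (f : α ≃ β) (z : Sym2 β) :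
    (z.map f.symm).map f = z := by
  rw [Sym2.map_map, f.self_comp_symm, Sym2.map_id, id]

namespace KneserVert

instance : MulAction (Perm (Fin 5)) KneserVert :=
  inferInstanceAs (MulAction (Perm (Fin 5)) (Set.powersetCard (Fin 5) 2))

instance : FaithfulSMul (Perm (Fin 5)) KneserVert :=
  Set.powersetCard.faithfulSMul (by norm_num) (by simp; norm_num)

instance : DecidableRel petersenGraph.Adj := fun a b =>
  inferInstanceAs (Decidable (Disjoint a.1 b.1))

abbrev permHom : Perm (Fin 5) →* Perm KneserVert := MulAction.toPermHom _ _

lemma coe_permHom_apply (g : Perm (Fin 5)) (a : KneserVert) : (permHom g a).1 = g • a.1 := rfl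

lemma permHom_injective : Function.Injective permHom := MulAction.toPerm_injective

lemma permHom_mem_graphAut (g : Perm (Fin 5)) : permHom g ∈ graphAut petersenGraph := by
  intro a b
  show Disjoint (g • a.1) (g • b.1) ↔ Disjoint a.1 b.1
  rw [← Finset.disjoint_coe, Finset.coe_smul_finset, Finset.coe_smul_finset,
    Set.disjoint_smul_set, Finset.disjoint_coe]

def star (i : Fin 5) : Finset KneserVert := {a | i ∈ a.1}

lemma mem_star {i : Fin 5} {a : KneserVert} : a ∈ star i ↔ i ∈ a.1 := by simp [star]

lemma isNIndepSet_star (i : Fin 5) : petersenGraph.IsNIndepSet 4 (star i) := by revert i; decide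

lemma star_injective : Function.Injective star := by decide

set_option maxRecDepth 10000 in
lemma eq_star_of_isNIndepSet {s : Finset KneserVert} (hs : petersenGraph.IsNIndepSet 4 s) :
    ∃ i, s = star i := by
  -- testing the cardinality first keeps `decide` fast
  have h : ∀ s : Finset KneserVert, s.card = 4 → petersenGraph.IsNIndepSet 4 s →
      ∃ i, s = star i := by
    decide
  exact h s hs.card_eq hs

theorem graphAut_le_range_permHom : graphAut petersenGraph ≤ permHom.range := by
  intro e he
  choose π hπ using fun i => eq_star_of_isNIndepSet ((isNIndepSet_star i).map_of_mem_graphAut he)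
  have hπ_inj : Function.Injective π := fun i j hij =>
    star_injective (Finset.map_injective _ (by rw [hπ, hπ, hij]))
  have hmem : ∀ a : KneserVert, ∀ i ∈ a.1, π i ∈ (e a).1 := fun a i hi =>
    mem_star.1 (hπ i ▸ Finset.mem_map_of_mem _ (mem_star.2 hi))
  refine ⟨Equiv.ofBijective π hπ_inj.bijective_of_finite, Equiv.ext fun a => Subtype.ext ?_⟩
  refine Finset.eq_of_subset_of_card_le (fun x hx => ?_) ((e a).2.trans (permHom _ a).2.symm).le
  rw [coe_permHom_apply] at hx
  obtain ⟨i, hi, rfl⟩ := Finset.mem_smul_finset.1 hx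
  exact hmem a i hi

theorem exists_intertwines {Line : Type*} {Gr : SimpleGraph Line} (f : Gr ≃g petersenGraph)
    {φ : Perm (Fin 5) →* Perm Line} (hφaut : ∀ g, φ g ∈ graphAut Gr)
    (hφinj : Function.Injective φ) :
    ∃ θ : Perm (Fin 5) ≃* Perm (Fin 5),
      ∀ g x, f.toEquiv (φ g x) = permHom (θ g) (f.toEquiv x) := by
  let ψ : Perm (Fin 5) →* Perm KneserVert := f.toEquiv.permCongrHom.toMonoidHom.comp φ
  have hψ_inj : Function.Injective ψ := f.toEquiv.permCongrHom.injective.comp hφinj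
  have hψ_range : ψ.range ≤ permHom.range := by
    rintro _ ⟨g, rfl⟩
    exact graphAut_le_range_permHom (f.permCongr_mem_graphAut (hφaut g))
  obtain ⟨θ, hθ⟩ :=
    MonoidHom.exists_mulEquiv_apply_eq_of_range_le hψ_inj permHom_injective hψ_range
  refine ⟨θ, fun g x => ?_⟩
  rw [← hθ]
  show _ = f.toEquiv (φ g (f.toEquiv.symm (f.toEquiv x)))
  rw [Equiv.symm_apply_apply]

def baseEdge : Sym2 KneserVert := s(⟨{0, 1}, rfl⟩, ⟨{2, 3}, rfl⟩)

set_option maxRecDepth 10000 in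
lemma exists_map_baseEdge {w : Sym2 KneserVert} (hw : w ∈ petersenGraph.edgeSet) :
    ∃ g, baseEdge.map (permHom g) = w := by
  revert w; decide

lemma baseEdge_mem_edgeSet : baseEdge ∈ petersenGraph.edgeSet := by decide

/-- The 4-cycle `(0 2 1 3)`; it swaps the endpoints `{0, 1}` and `{2, 3}` of `baseEdge`. -/
def fourCycle : Perm (Fin 5) := swap 0 2 * swap 2 1 * swap 1 3

def dihedralHom : DihedralGroup 4 →* Perm (Fin 5) where
  toFun
    | .r i => fourCycle ^ i.val
    | .sr i => swap 0 1 * fourCycle ^ i.val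
  map_one' := by decide
  map_mul' := by decide

lemma dihedralHom_injective : Function.Injective dihedralHom := by decide

set_option maxRecDepth 10000 in
lemma range_dihedralHom : dihedralHom.range = (sym2Stab baseEdge).comap permHom := by
  have h_le : ∀ x, baseEdge.map (permHom (dihedralHom x)) = baseEdge := by decide
  have h_ge : ∀ g, baseEdge.map (permHom g) = baseEdge → ∃ x, dihedralHom x = g := by decide
  ext g
  exact ⟨by rintro ⟨x, rfl⟩; exact h_le x, h_ge g⟩

set_option maxRecDepth 10000 in
lemma eq_baseEdge_of_comap_sym2Stab_eq {w : Sym2 KneserVert} (hw : w ∈ petersenGraph.edgeSet)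
    (h : (sym2Stab w).comap permHom = (sym2Stab baseEdge).comap permHom) : w = baseEdge := by
  have h_fix : ∀ w ∈ petersenGraph.edgeSet,
      (∀ x, w.map (permHom (dihedralHom x)) = w) → w = baseEdge := by decide
  refine h_fix w hw fun x => ?_
  rw [← mem_sym2Stab, ← Subgroup.mem_comap, h, ← range_dihedralHom]
  exact ⟨x, rfl⟩

noncomputable def dihedralStabEquiv : (sym2Stab baseEdge).comap permHom ≃* DihedralGroup 4 :=
  (MulEquiv.subgroupCongr range_dihedralHom.symm).trans
    (MonoidHom.ofInjective dihedralHom_injective).symm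

lemma factorization_card_perm_two : (Nat.card (Perm (Fin 5))).factorization 2 = 3 := by
  rw [Nat.card_perm, Nat.card_fin, Nat.factorization_def _ Nat.prime_two,
    show (5 : ℕ).factorial = 2 ^ 3 * 15 by rfl, padicValNat.mul (by norm_num) (by norm_num),
    padicValNat.prime_pow, padicValNat.eq_zero_of_not_dvd (by decide)]

def baseSylow : Sylow 2 (Perm (Fin 5)) :=
  Sylow.ofCard ((sym2Stab baseEdge).comap permHom) (by
    rw [Nat.card_congr dihedralStabEquiv.toEquiv, DihedralGroup.nat_card,
      factorization_card_perm_two]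
    rfl)

lemma coe_smul_baseSylow (g : Perm (Fin 5)) :
    ((g • baseSylow : Sylow 2 (Perm (Fin 5))) : Subgroup (Perm (Fin 5))) =
      (sym2Stab (baseEdge.map (permHom g))).comap permHom := by
  rw [Sylow.coe_subgroup_smul, comap_sym2Stab_map]
  rfl

theorem exists_map_eq {w₁ w₂ : Sym2 KneserVert} (h₁ : w₁ ∈ petersenGraph.edgeSet)
    (h₂ : w₂ ∈ petersenGraph.edgeSet) : ∃ g, w₁.map (permHom g) = w₂ := by
  obtain ⟨g₁, rfl⟩ := exists_map_baseEdge h₁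
  obtain ⟨g₂, rfl⟩ := exists_map_baseEdge h₂
  refine ⟨g₂ * g₁⁻¹, ?_⟩
  rw [Sym2.map_map, ← Perm.coe_mul, ← map_mul, inv_mul_cancel_right]

theorem exists_sylow_eq_comap_sym2Stab {w : Sym2 KneserVert} (hw : w ∈ petersenGraph.edgeSet) :
    ∃ P : Sylow 2 (Perm (Fin 5)),
      (sym2Stab w).comap permHom = P ∧ Nonempty (P ≃* DihedralGroup 4) := by
  obtain ⟨g, rfl⟩ := exists_map_baseEdge hw
  exact ⟨g • baseSylow, (coe_smul_baseSylow g).symm,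
    ⟨(baseSylow.equivSMul g).symm.trans dihedralStabEquiv⟩⟩

theorem existsUnique_comap_sym2Stab_eq (P : Sylow 2 (Perm (Fin 5))) :
    ∃! w, w ∈ petersenGraph.edgeSet ∧ (sym2Stab w).comap permHom = P := by
  obtain ⟨g, rfl⟩ := MulAction.exists_smul_eq (Perm (Fin 5)) baseSylow P
  refine ⟨baseEdge.map (permHom g), ⟨?_, (coe_smul_baseSylow g).symm⟩, ?_⟩
  · exact Sym2.map_mem_edgeSet_of_mem_graphAut (permHom_mem_graphAut g) baseEdge_mem_edgeSet
  rintro w ⟨hw, hwP⟩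
  have hbase : w.map (permHom g⁻¹) = baseEdge := by
    refine eq_baseEdge_of_comap_sym2Stab_eq
      (Sym2.map_mem_edgeSet_of_mem_graphAut (permHom_mem_graphAut _) hw) ?_
    rw [comap_sym2Stab_map, hwP, coe_smul_baseSylow, comap_sym2Stab_map, smul_smul, map_inv,
      inv_mul_cancel, one_smul]
  rw [← hbase, map_inv, Perm.inv_def, Sym2.map_map_equiv_symm]

end KneserVert

/-- Let `S` be the quintic del Pezzo surface with `Aut(S) ≅ S₅`, whose 10 lines
form the Petersen graph, and let `Ξ` be the set of 15 intersection points of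
pairs of lines, i.e. the edges of the Petersen graph.  Then `S₅` acts
transitively on `Ξ`, the stabilizer of each point of `Ξ` is a Sylow 2-subgroup
of `S₅` (dihedral of order 8), and the map `Ξ → {Sylow 2-subgroups of S₅}`
sending a point to its stabilizer is a bijection. -/
theorem S5_action_on_intersection_points_of_quintic_delPezzo
    (Line : Type) (Gr : SimpleGraph Line)
    (hGr : Nonempty (Gr ≃g petersenGraph))
    (φ : Equiv.Perm (Fin 5) →* Equiv.Perm Line)
    (hφaut : ∀ g : Equiv.Perm (Fin 5), φ g ∈ graphAut Gr)
    (hφinj : Function.Injective φ) :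
    (∀ z₁ z₂ : Sym2 Line, z₁ ∈ Gr.edgeSet → z₂ ∈ Gr.edgeSet →
      ∃ g : Equiv.Perm (Fin 5), Sym2.map (⇑(φ g)) z₁ = z₂) ∧
    (∀ z : Sym2 Line, z ∈ Gr.edgeSet →
      (∃ P : Sylow 2 (Equiv.Perm (Fin 5)),
        Subgroup.comap φ (sym2Stab z) = (P : Subgroup (Equiv.Perm (Fin 5)))) ∧
      Nonempty ((Subgroup.comap φ (sym2Stab z)) ≃* DihedralGroup 4)) ∧
    (∀ P : Sylow 2 (Equiv.Perm (Fin 5)),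
      ∃! z : Sym2 Line, z ∈ Gr.edgeSet ∧
        Subgroup.comap φ (sym2Stab z) = (P : Subgroup (Equiv.Perm (Fin 5)))) := by
  obtain ⟨f⟩ := hGr
  obtain ⟨θ, hθ⟩ := KneserVert.exists_intertwines f hφaut hφinj
  have h_edge {z : Sym2 Line} : z.map f.toEquiv ∈ petersenGraph.edgeSet ↔ z ∈ Gr.edgeSet :=
    f.map_mem_edgeSet_iff
  have hstab := comap_sym2Stab_of_intertwines hθ
  refine ⟨fun z₁ z₂ h₁ h₂ => ?_, fun z hz => ?_, fun P => ?_⟩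
  · obtain ⟨g, hg⟩ := KneserVert.exists_map_eq (h_edge.2 h₁) (h_edge.2 h₂)
    refine ⟨θ.symm g, Sym2.map.injective f.toEquiv.injective ?_⟩
    rw [Sym2.map_map_of_intertwines hθ, θ.apply_symm_apply, hg]
  · obtain ⟨Q, hQ, ⟨e⟩⟩ := KneserVert.exists_sylow_eq_comap_sym2Stab (h_edge.2 hz)
    rw [hstab, hQ]
    exact ⟨⟨Q.mapSurjective θ.symm.surjective, rfl⟩,
      ⟨(θ.symm.subgroupMap Q).symm.trans e⟩⟩
  · obtain ⟨w, ⟨hw, hwP⟩, huniq⟩ := KneserVert.existsUnique_comap_sym2Stab_eq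
      (P.mapSurjective (f := θ.toMonoidHom) θ.surjective)
    refine ⟨w.map f.toEquiv.symm, ⟨h_edge.1 ?_, ?_⟩, fun z ⟨hz, hzP⟩ => ?_⟩
    · rwa [Sym2.map_map_equiv_symm]
    · rw [hstab, Sym2.map_map_equiv_symm]
      exact (Subgroup.map_symm_eq_iff_map_eq _).2 hwP.symm
    · apply Sym2.map.injective f.toEquiv.injective
      rw [hstab] at hzP
      rw [Sym2.map_map_equiv_symm]
      exact huniq _ ⟨h_edge.2 hz, ((Subgroup.map_symm_eq_iff_map_eq _).1 hzP).symm⟩
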